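/- The operator P₁ : Dom(P₁) ⊂ C₁(Ḡ) → C₁(Ḡ), defined by P₁u = Δu on Dom(P₁) = {u ∈ C₁(Ḡ) : Δu ∈ C₁(Ḡ)} (with Δu understood in the sense of distributions), admits a closure P̄₁ : Dom(P̄₁) ⊂ C₁(Ḡ) → C₁(Ḡ) as an unbounded operator in the Banach space C₁(Ḡ). -/

import Mathlib

open MeasureTheory Metric Set Filter Topology BoundedContinuousFunction

noncomputable section

/-- The plane `ℝ²`. -/
abbrev E2 := EuclideanSpace ℝ (Fin 2)

/-- The Laplacian of a function `φ : ℝ² → ℝ`. -/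
def lap (φ : E2 → ℝ) (x : E2) : ℝ :=
  ∑ i : Fin 2,
    fderiv ℝ (fun y => fderiv ℝ φ y (EuclideanSpace.single i 1)) x (EuclideanSpace.single i 1)

/-- `f` is the Laplacian of `u` on the open set `G` in the sense of distributions. -/
def IsDistLaplacianOn (G : Set E2) (u f : E2 → ℝ) : Prop :=
  ∀ φ : E2 → ℝ, ContDiff ℝ (⊤ : ℕ∞) φ → HasCompactSupport φ → tsupport φ ⊆ G →
    ∫ x in G, u x * lap φ x = ∫ x in G, f x * φ x

/-- Extension by zero (to the whole plane) of a function defined on `closure G`. -/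
def extendByZero (G : Set E2) (u : ↥(closure G) →ᵇ ℝ) : E2 → ℝ :=
  Function.extend Subtype.val (⇑u) 0

/-- `Γ` is a smooth (`C^∞`) regular simple curve. -/
def IsSmoothCurve (Γ : Set E2) : Prop :=
  ∃ γ : ℝ → E2, ContDiff ℝ (⊤ : ℕ∞) γ ∧ InjOn γ (Ioo 0 1) ∧
    (∀ t ∈ Ioo (0 : ℝ) 1, deriv γ t ≠ 0) ∧ γ '' Ioo 0 1 = Γ

/-- Near the point `g`, the region `G` coincides with a plane angle of opening `π`
(i.e. with a half-plane whose boundary line passes through `g`). -/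
def HasFlatAngleAt (G : Set E2) (g : E2) (ε : ℝ) : Prop :=
  ∃ ν : E2, ν ≠ 0 ∧ G ∩ ball g ε = {x | 0 < (inner ℝ ν (x - g) : ℝ)} ∩ ball g ε

/-- `Ω` is a smooth nondegenerate transformation (injective with everywhere
invertible differential) defined on a neighborhood of the curve `closure Γ`. -/
def IsSmoothNondegOn (Ω : E2 → E2) (Γ : Set E2) : Prop :=
  ∃ U : Set E2, IsOpen U ∧ closure Γ ⊆ U ∧ ContDiffOn ℝ (⊤ : ℕ∞) Ω U ∧
    InjOn Ω U ∧ ∀ y ∈ U, LinearMap.det ((fderiv ℝ Ω y) : E2 →ₗ[ℝ] E2) ≠ 0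

/-- `b ∈ C^∞(closure Γ)`: `b` is smooth on a neighborhood of `closure Γ`. -/
def IsSmoothOnCl (b : E2 → ℝ) (Γ : Set E2) : Prop :=
  ∃ U : Set E2, IsOpen U ∧ closure Γ ⊆ U ∧ ContDiffOn ℝ (⊤ : ℕ∞) b U

/-- The geometric data of Example 1: a bounded plane region `G` with smooth boundary
`∂G = Γ₁ ∪ Γ₂ ∪ {g₁, g₂}`, coinciding with a plane angle of opening `π` near `g₁, g₂`,
a coefficient `b₁ ∈ C^∞(closure Γ₁)` and a smooth nondegenerate transformation `Ω₁`
mapping `Γ₁` into `G`, equal near `g₁` to a rotation about `g₁` composed with a shift. -/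
structure Setting1 where
  /-- the region -/
  G : Set E2
  /-- the boundary arcs -/
  Γ₁ : Set E2
  Γ₂ : Set E2
  /-- the conjugation points, `𝒦 = {g₁, g₂}` -/
  g₁ : E2
  g₂ : E2
  ε : ℝ
  hG_open : IsOpen G
  hG_conn : IsConnected G
  hG_bdd : Bornology.IsBounded G
  hg_ne : g₁ ≠ g₂
  /-- `∂G = Γ₁ ∪ Γ₂ ∪ 𝒦` -/
  hbdry : frontier G = Γ₁ ∪ Γ₂ ∪ {g₁, g₂}
  /-- `Γ₁ ∩ Γ₂ = ∅` -/
  hΓ_disj : Γ₁ ∩ Γ₂ = ∅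
  hK_disj : ({g₁, g₂} : Set E2) ∩ (Γ₁ ∪ Γ₂) = ∅
  /-- `closure Γ₁ ∩ closure Γ₂ = 𝒦` -/
  hΓcl : closure Γ₁ ∩ closure Γ₂ = {g₁, g₂}
  /-- `Γ₁`, `Γ₂` are open in the topology of `∂G` -/
  hΓ₁_open : ∃ V : Set E2, IsOpen V ∧ Γ₁ = V ∩ frontier G
  hΓ₂_open : ∃ V : Set E2, IsOpen V ∧ Γ₂ = V ∩ frontier G
  hΓ₁_conn : IsConnected Γ₁
  hΓ₂_conn : IsConnected Γ₂
  hΓ₁_curve : IsSmoothCurve Γ₁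
  hΓ₂_curve : IsSmoothCurve Γ₂
  hε : 0 < ε
  /-- `G` coincides with a plane angle of opening `π` near `g₁` and `g₂` -/
  hangle₁ : HasFlatAngleAt G g₁ ε
  hangle₂ : HasFlatAngleAt G g₂ ε
  /-- the coefficient in the nonlocal condition -/
  b₁ : E2 → ℝ
  /-- the transformation in the nonlocal condition -/
  Ω₁ : E2 → E2
  hb₁_smooth : IsSmoothOnCl b₁ Γ₁
  hb₁_range : ∀ y ∈ closure Γ₁, 0 ≤ b₁ y ∧ b₁ y ≤ 1
  /-- `b₁ = const > 0` on `𝒪_{ε/2}(g₁)` -/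
  hb₁_const : ∃ c : ℝ, 0 < c ∧ ∀ y ∈ closure Γ₁ ∩ ball g₁ (ε / 2), b₁ y = c
  /-- `b₁ = 0` outside `𝒪_ε(g₁)` -/
  hb₁_zero : ∀ y ∈ closure Γ₁, y ∉ ball g₁ ε → b₁ y = 0
  hΩ₁_nondeg : IsSmoothNondegOn Ω₁ Γ₁
  /-- `Ω₁(Γ₁) ⊆ G` -/
  hΩ₁_maps : Ω₁ '' Γ₁ ⊆ G
  /-- `Ω₁(g₁) ∈ G` -/
  hΩ₁_g₁ : Ω₁ g₁ ∈ G
  /-- on `𝒪_ε(g₁)`, `Ω₁` is the composition of a rotation about `g₁` and a shift -/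
  hΩ₁_rot : ∃ (R : E2 ≃ₗᵢ[ℝ] E2) (v : E2), R.toLinearEquiv.det = 1 ∧
    ∀ y ∈ ball g₁ ε, Ω₁ y = g₁ + v + R (y - g₁)
  -- inclusions (consequences of the above) needed to state the nonlocal conditions
  hΓ₁_sub : Γ₁ ⊆ closure G
  hΓ₂cl_sub : closure Γ₂ ⊆ closure G
  hΩ₁_sub : ∀ y ∈ Γ₁, Ω₁ y ∈ closure G

/-- The space `C₁(Ḡ)`: continuous functions `u` on `closure G` satisfying the nonlocal
conditions `u(y) - b₁(y) u(Ω₁(y)) = 0` for `y ∈ Γ₁` and `u(y) = 0` for `y ∈ closure Γ₂`. -/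
def Setting1.C1 (S : Setting1) : Set (↥(closure S.G) →ᵇ ℝ) :=
  {u | (∀ y, ∀ hy : y ∈ S.Γ₁,
          u ⟨y, S.hΓ₁_sub hy⟩ - S.b₁ y * u ⟨S.Ω₁ y, S.hΩ₁_sub y hy⟩ = 0) ∧
       (∀ y, ∀ hy : y ∈ closure S.Γ₂, u ⟨y, S.hΓ₂cl_sub hy⟩ = 0)}

/-- The graph of the operator `P₁ : Dom(P₁) ⊆ C₁(Ḡ) → C₁(Ḡ)`, `P₁ u = Δu` on
`Dom(P₁) = {u ∈ C₁(Ḡ) : Δu ∈ C₁(Ḡ)}`, the Laplacian taken in the sense of distributions. -/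
def Setting1.graphP (S : Setting1) :
    Set ((↥(closure S.G) →ᵇ ℝ) × (↥(closure S.G) →ᵇ ℝ)) :=
  {p | p.1 ∈ S.C1 ∧ p.2 ∈ S.C1 ∧
    IsDistLaplacianOn S.G (extendByZero S.G p.1) (extendByZero S.G p.2)}

/-! Every pair `(u, f)` in the graph satisfies `∫_G u Δφ = ∫_G f φ` for each test function `φ`,
and both sides are continuous in the sup norm; so the identity survives in the closure of the
graph. If two pairs of the closure share `u`, then `f₁ - f₂` annihilates every test function,
hence vanishes on `G` by the fundamental lemma of the calculus of variations, and on `closure G`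
by continuity. -/

section ExtendByZero

variable {G : Set E2}

lemma extendByZero_apply (u : ↥(closure G) →ᵇ ℝ) {x : E2} (hx : x ∈ closure G) :
    extendByZero G u x = u ⟨x, hx⟩ :=
  Subtype.val_injective.extend_apply (⇑u) 0 ⟨x, hx⟩

lemma continuousOn_extendByZero (u : ↥(closure G) →ᵇ ℝ) :
    ContinuousOn (extendByZero G u) (closure G) := by
  rw [continuousOn_iff_continuous_domRestrict]
  convert u.continuous using 1
  funext a
  exact extendByZero_apply u a.2

lemma norm_extendByZero_le (u : ↥(closure G) →ᵇ ℝ) (x : E2) :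
    ‖extendByZero G u x‖ ≤ ‖u‖ := by
  by_cases hx : x ∈ closure G
  · rw [extendByZero_apply u hx]
    exact u.norm_coe_le_norm _
  · rw [extendByZero, Function.extend_apply' _ _ _ fun ⟨a, ha⟩ => hx (ha ▸ a.2)]
    simp

lemma integrableOn_extendByZero_mul (hG : MeasurableSet G) (u : ↥(closure G) →ᵇ ℝ)
    {ψ : E2 → ℝ} (hψ : IntegrableOn ψ G) :
    IntegrableOn (fun x => extendByZero G u x * ψ x) G :=
  hψ.bdd_mul (((continuousOn_extendByZero u).mono subset_closure).aestronglyMeasurable hG)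
    (Eventually.of_forall (norm_extendByZero_le u))

lemma continuous_integral_extendByZero_mul (hG : MeasurableSet G) {ψ : E2 → ℝ}
    (hψ : IntegrableOn ψ G) :
    Continuous fun u : ↥(closure G) →ᵇ ℝ => ∫ x in G, extendByZero G u x * ψ x := by
  refine (LipschitzWith.of_dist_le' (K := ∫ x in G, ‖ψ x‖) fun u v => ?_).continuous
  rw [Real.dist_eq, ← integral_sub (integrableOn_extendByZero_mul hG u hψ)
    (integrableOn_extendByZero_mul hG v hψ), ← Real.norm_eq_abs, mul_comm,
    ← integral_const_mul]
  refine norm_integral_le_of_norm_le (hψ.norm.const_mul _) (ae_restrict_of_forall_mem hG ?_)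
  intro x hx
  rw [← sub_mul, norm_mul, extendByZero_apply u (subset_closure hx),
    extendByZero_apply v (subset_closure hx), ← dist_eq_norm]
  gcongr
  exact BoundedContinuousFunction.dist_coe_le_dist _

lemma eq_of_integral_extendByZero_mul_eq (hG : IsOpen G) {u v : ↥(closure G) →ᵇ ℝ}
    (h : ∀ φ : E2 → ℝ, ContDiff ℝ (⊤ : ℕ∞) φ → HasCompactSupport φ → tsupport φ ⊆ G →
      ∫ x in G, extendByZero G u x * φ x = ∫ x in G, extendByZero G v x * φ x) :
    u = v := by
  have hcont (w : ↥(closure G) →ᵇ ℝ) : ContinuousOn (extendByZero G w) G :=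
    (continuousOn_extendByZero w).mono subset_closure
  have hae : ∀ᵐ x, x ∈ G → extendByZero G u x - extendByZero G v x = 0 := by
    refine hG.ae_eq_zero_of_integral_contDiff_smul_eq_zero
      (((hcont u).sub (hcont v)).locallyIntegrableOn hG.measurableSet) fun φ hφ hφc hφG => ?_
    have hφi : IntegrableOn φ G := (hφ.continuous.integrable_of_hasCompactSupport hφc).integrableOn
    rw [← setIntegral_eq_integral_of_forall_compl_eq_zero (s := G) fun x hx => by
        simp [image_eq_zero_of_notMem_tsupport fun h => hx (hφG h)]]
    simp only [smul_eq_mul, mul_comm (φ _), sub_mul]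
    rw [integral_sub (integrableOn_extendByZero_mul hG.measurableSet u hφi)
      (integrableOn_extendByZero_mul hG.measurableSet v hφi), h φ hφ hφc hφG, sub_self]
  have hG_eq : EqOn (extendByZero G u) (extendByZero G v) G :=
    Measure.eqOn_open_of_ae_eq ((ae_restrict_iff' hG.measurableSet).2 <| hae.mono
      fun x hx hxG => sub_eq_zero.1 (hx hxG)) hG (hcont u) (hcont v)
  have hcl_eq := hG_eq.of_subset_closure (continuousOn_extendByZero u)
    (continuousOn_extendByZero v) subset_closure subset_rfl
  ext a
  rw [← extendByZero_apply u a.2, ← extendByZero_apply v a.2]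
  exact hcl_eq a.2

end ExtendByZero

lemma continuous_lap {φ : E2 → ℝ} (hφ : ContDiff ℝ 2 φ) : Continuous (lap φ) := by
  refine continuous_finsetSum _ fun i _ => ?_
  have hφ' : ContDiff ℝ 1 (fun y => fderiv ℝ φ y (EuclideanSpace.single i 1)) :=
    (hφ.fderiv_right (m := 1) (by norm_num)).clm_apply contDiff_const
  exact (hφ'.continuous_fderiv one_ne_zero).clm_apply continuous_const

lemma HasCompactSupport.lap {φ : E2 → ℝ} (hφ : HasCompactSupport φ) :
    HasCompactSupport (lap φ) := by
  unfold _root_.lap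
  simp only [Fin.sum_univ_two]
  exact ((hφ.fderiv_apply ℝ _).fderiv_apply ℝ _).add ((hφ.fderiv_apply ℝ _).fderiv_apply ℝ _)

lemma isClosed_setOf_isDistLaplacianOn {G : Set E2} (hG : MeasurableSet G) :
    IsClosed {p : (↥(closure G) →ᵇ ℝ) × (↥(closure G) →ᵇ ℝ) |
      IsDistLaplacianOn G (extendByZero G p.1) (extendByZero G p.2)} := by
  simp only [IsDistLaplacianOn, ofPred_forall]
  refine isClosed_iInter fun φ => isClosed_iInter fun hφ => isClosed_iInter fun hφc =>
    isClosed_iInter fun _ => isClosed_eq ?_ ?_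
  · have hlap : IntegrableOn (lap φ) G :=
      ((continuous_lap (hφ.of_le (WithTop.coe_le_coe.2 le_top))).integrable_of_hasCompactSupport
        hφc.lap).integrableOn
    exact (continuous_integral_extendByZero_mul hG hlap).comp continuous_fst
  · exact (continuous_integral_extendByZero_mul hG
      (hφ.continuous.integrable_of_hasCompactSupport hφc).integrableOn).comp continuous_snd

/-- The operator `P1 u = Δu` with domain `{u ∈ C1(Ḡ) : Δu ∈ C1(Ḡ)}` admits a closure
in the Banach space `C1(Ḡ)`: the closure of its graph is again the graph of a
(single-valued) operator. -/
theorem P1_admits_closure (S : Setting1) :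
    ∀ p ∈ closure S.graphP, ∀ q ∈ closure S.graphP, p.1 = q.1 → p.2 = q.2 := by
  have hlap : closure S.graphP ⊆ {p | IsDistLaplacianOn S.G (extendByZero S.G p.1)
      (extendByZero S.G p.2)} :=
    closure_minimal (fun p hp => hp.2.2) (isClosed_setOf_isDistLaplacianOn S.hG_open.measurableSet)
  intro p hp q hq hpq
  refine eq_of_integral_extendByZero_mul_eq S.hG_open fun φ hφ hφc hφG => ?_
  rw [← hlap hp φ hφ hφc hφG, ← hlap hq φ hφ hφc hφG, hpq]

end
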